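/- arXiv:1507.03050 — 2 statements merged into one kernel-verified Lean document; each statement's English description precedes it below -/
import Mathlib

section
/- Let G be a locally finite connected graph, let g_0 be a vertex of G, let s_n be the number of vertices at distance exactly n from g_0, and let d ≥ 2 be an integer. If liminf_{n→∞} s_n / n^{d-1} is finite, then G satisfies the O(n^{d-2})-containment property. -/
open SimpleGraph

namespace Firefighter

variable {V : Type*}

/-- The set of vertices on fire at time `n`, starting from initial fire `X0`, with fire spreading
along paths of length at most `r` avoiding the protected sets `W 1, ..., W n`. -/
def fireSet (G : SimpleGraph V) (r : ℕ) (X0 : Set V) (W : ℕ → Set V) : ℕ → Set V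
  | 0 => X0
  | n + 1 => {v | ∃ u ∈ fireSet G r X0 W n, ∃ p : G.Walk u v, p.length ≤ r ∧
      ∀ w ∈ p.support, ∀ i, 1 ≤ i → i ≤ n + 1 → w ∉ W i}

/-- `W` is an `(f, r)`-containment strategy for the initial fire `X0` in `G`. -/
def IsContainmentStrategy (G : SimpleGraph V) (r : ℕ) (f : ℕ → ℕ)
    (X0 : Set V) (W : ℕ → Set V) : Prop :=
  (∀ n, 1 ≤ n → (W n).Finite ∧ (W n).ncard ≤ f n) ∧
  (∀ n, Disjoint (fireSet G r X0 W n) (W (n + 1))) ∧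
  (∃ N, 0 < N ∧ ∀ n, N ≤ n → fireSet G r X0 W n = fireSet G r X0 W N)

/-- `G` has the `(f, r)`-containment property. -/
def HasContainmentProperty (G : SimpleGraph V) (r : ℕ) (f : ℕ → ℕ) : Prop :=
  ∀ X0 : Set V, X0.Finite → ∃ W : ℕ → Set V, IsContainmentStrategy G r f X0 W

/-- A graph is locally finite if every vertex has finitely many neighbors. -/
def LocallyFiniteGraph (G : SimpleGraph V) : Prop := ∀ v, (G.neighborSet v).Finite

/-- The ball of radius `n` about the vertex `g0` (in the combinatorial metric). -/
def ball (G : SimpleGraph V) (g0 : V) (n : ℕ) : Set V :=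
  {v | G.Reachable g0 v ∧ G.dist g0 v ≤ n}

/-- The sphere of radius `n` about the vertex `g0` (in the combinatorial metric). -/
def sphere (G : SimpleGraph V) (g0 : V) (n : ℕ) : Set V :=
  {v | G.Reachable g0 v ∧ G.dist g0 v = n}

/-- For `T` a subset of the sphere of radius `n`, `nextAdj G g0 n T` is the set `T*` of vertices
of the sphere of radius `n+1` adjacent to at least one vertex of `T`. -/
def nextAdj (G : SimpleGraph V) (g0 : V) (n : ℕ) (T : Set V) : Set V :=
  {v ∈ sphere G g0 (n + 1) | ∃ u ∈ T, G.Adj u v}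

/-- A graph has bounded degree if there is a uniform finite bound on vertex degrees. -/
def BoundedDegree (G : SimpleGraph V) : Prop :=
  ∃ D : ℕ, ∀ v, (G.neighborSet v).Finite ∧ (G.neighborSet v).ncard ≤ D

/-- Two graphs are quasi-isometric. -/
def QuasiIsometric {V' : Type*} (G : SimpleGraph V) (H : SimpleGraph V') : Prop :=
  ∃ c : ℕ, 1 ≤ c ∧ ∃ (φ : V → V') (ψ : V' → V),
    (∀ g1 g2, H.dist (φ g1) (φ g2) ≤ c * G.dist g1 g2 + c) ∧
    (∀ h1 h2, G.dist (ψ h1) (ψ h2) ≤ c * H.dist h1 h2 + c) ∧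
    (∀ g, G.dist g (ψ (φ g)) ≤ c) ∧
    (∀ h, H.dist h (φ (ψ h)) ≤ c)

/-- `f ≼ g` : there is `c > 0` with `f n ≤ c * g (c*n + c) + c` for all `n ≥ c`. -/
def Preceq (f g : ℕ → ℕ) : Prop :=
  ∃ c : ℕ, 0 < c ∧ ∀ n, c ≤ n → f n ≤ c * g (c * n + c) + c

/-- `f` and `g` have equivalent asymptotic growth. -/
def AsympEquiv (f g : ℕ → ℕ) : Prop := Preceq f g ∧ Preceq g f

/-- The ball of radius `n` about a set `X` of vertices. -/
def ballSet (G : SimpleGraph V) (X : Set V) (n : ℕ) : Set V :=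
  {v | ∃ u ∈ X, ∃ p : G.Walk u v, p.length ≤ n}

/-- Balls in a locally finite graph are finite. -/
lemma ball_finite (G : SimpleGraph V) (hlf : LocallyFiniteGraph G) (g0 : V) :
    ∀ n, (ball G g0 n).Finite := by
  intro n
  induction n with
  | zero =>
    refine Set.Finite.subset (Set.finite_singleton g0) ?_
    rintro v ⟨hr, hdle⟩
    have h0 : G.dist g0 v = 0 := Nat.le_zero.mp hdle
    have : g0 = v := hr.dist_eq_zero_iff.mp h0
    simp [this]
  | succ n ih =>
    refine Set.Finite.subset (ih.union (Set.Finite.biUnion ih (fun u _ => hlf u))) ?_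
    rintro v ⟨hr, hdle⟩
    rcases Nat.lt_or_ge (G.dist g0 v) (n + 1) with h | h
    · exact Or.inl ⟨hr, Nat.lt_succ_iff.mp h⟩
    · have hdist : G.dist g0 v = n + 1 := le_antisymm hdle h
      obtain ⟨p, hp⟩ := hr.exists_walk_length_eq_dist
      rw [hdist] at hp
      have hql : p.reverse.length = n + 1 := by
        rw [SimpleGraph.Walk.length_reverse, hp]
      cases hq : p.reverse with
      | nil =>
        rw [hq] at hql
        simp at hql
      | cons h' q' =>
        rw [hq] at hql
        rw [SimpleGraph.Walk.length_cons] at hql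
        rename_i w
        have hw : w ∈ ball G g0 n := by
          refine ⟨⟨q'.reverse⟩, ?_⟩
          have := SimpleGraph.dist_le q'.reverse
          rwa [SimpleGraph.Walk.length_reverse, Nat.succ_injective hql] at this
        exact Or.inr (Set.mem_biUnion hw h'.symm)

open scoped ENNReal in
/-- From the finiteness of the liminf, extract a constant `C` and arbitrarily large radii `m`
with small spheres. -/
lemma exists_good_radii (G : SimpleGraph V) (g0 : V) (d : ℕ)
    (hliminf : Filter.liminf
      (fun n : ℕ => ((sphere G g0 n).ncard : ℝ≥0∞) / (n : ℝ≥0∞) ^ (d - 1))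
      Filter.atTop ≠ ⊤) :
    ∃ C : ℕ, 1 ≤ C ∧ ∀ M, ∃ m, M ≤ m ∧ 1 ≤ m ∧
      (sphere G g0 m).ncard ≤ C * m ^ (d - 1) := by
  obtain ⟨C, hC⟩ := ENNReal.exists_nat_gt hliminf
  have hfreq := Filter.frequently_lt_of_liminf_lt (by isBoundedDefault) hC
  refine ⟨max C 1, le_max_right _ _, fun M => ?_⟩
  obtain ⟨m, hm, hlt⟩ := (Filter.frequently_atTop.mp hfreq) (max M 1)
  refine ⟨m, le_trans (le_max_left _ _) hm, le_trans (le_max_right _ _) hm, ?_⟩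
  have hm1 : 1 ≤ m := le_trans (le_max_right _ _) hm
  have hpow0 : ((m : ℝ≥0∞)) ^ (d - 1) ≠ 0 := by
    apply pow_ne_zero
    have : (0:ℕ) < m := hm1
    exact_mod_cast this.ne'
  have hpowt : ((m : ℝ≥0∞)) ^ (d - 1) ≠ ⊤ := by
    apply ENNReal.pow_ne_top
    exact ENNReal.natCast_ne_top m
  have h2 : ((sphere G g0 m).ncard : ℝ≥0∞) < (C : ℝ≥0∞) * (m : ℝ≥0∞) ^ (d - 1) :=
    (ENNReal.div_lt_iff (Or.inl hpow0) (Or.inl hpowt)).mp hlt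
  have h3 : ((sphere G g0 m).ncard : ℝ≥0∞) < ((C * m ^ (d - 1) : ℕ) : ℝ≥0∞) := by
    push_cast
    exact h2
  have h4 : (sphere G g0 m).ncard ≤ C * m ^ (d - 1) := (Nat.cast_lt.mp h3).le
  calc (sphere G g0 m).ncard ≤ C * m ^ (d - 1) := h4
    _ ≤ max C 1 * m ^ (d - 1) := Nat.mul_le_mul_right _ (le_max_left _ _)

open scoped ENNReal in
/-- if `liminf s_n / n^(d-1)` is finite, where `s_n` is the number of vertices at
distance exactly `n` from `g0`, then `G` satisfies the `O(n^(d-2))`-containment property. -/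
theorem stmt2 {V : Type*} (G : SimpleGraph V) (hconn : G.Connected)
    (hlf : LocallyFiniteGraph G) (g0 : V) (d : ℕ) (hd : 2 ≤ d)
    (hliminf : Filter.liminf
      (fun n : ℕ => ((sphere G g0 n).ncard : ℝ≥0∞) / (n : ℝ≥0∞) ^ (d - 1))
      Filter.atTop ≠ ⊤) :
    ∃ c : ℕ, 1 ≤ c ∧ HasContainmentProperty G 1 (fun n => c * n ^ (d - 2)) := by
  classical
  obtain ⟨C, hC1, hC⟩ := exists_good_radii G g0 d hliminf
  refine ⟨C * 4 ^ d, Nat.one_le_iff_ne_zero.mpr (by positivity), ?_⟩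
  set c : ℕ := C * 4 ^ d with hc
  intro X0 hX0
  -- radius of a ball containing the initial fire
  set R0 : ℕ := hX0.toFinset.sup (fun v => G.dist g0 v) with hR0
  have hX0ball : X0 ⊆ ball G g0 R0 := by
    intro v hv
    exact ⟨hconn.preconnected g0 v,
      Finset.le_sup (f := fun v => G.dist g0 v) (hX0.mem_toFinset.mpr hv)⟩
  -- choose a good radius m
  obtain ⟨m, hmM, hm1, hSm⟩ := hC (2 * R0 + 8)
  have hm8 : 2 * R0 + 8 ≤ m := hmM
  set T : ℕ := m - R0 with hT
  set k : ℕ := m / 4 + 1 with hk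
  have h2k : 2 * k ≤ T := by omega
  have h4k : m ≤ 4 * k := by omega
  have hk1 : 1 ≤ k := by omega
  -- the budget function
  set A : ℕ → ℕ := fun j => ∑ i ∈ Finset.Icc 1 j, c * i ^ (d - 2) with hA
  have hA0 : A 0 = 0 := by simp [hA]
  have hAstep : ∀ j, A (j + 1) = A j + c * (j + 1) ^ (d - 2) := by
    intro j
    have hins : insert (j + 1) (Finset.Icc 1 j) = Finset.Icc 1 (j + 1) :=
      Finset.insert_Icc_right_eq_Icc_add_one (by omega)
    have hnotmem : (j + 1) ∉ Finset.Icc 1 j := by simp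
    rw [hA]
    simp only
    rw [← hins, Finset.sum_insert hnotmem]
    ring
  have hAmono : Monotone A := by
    intro a b hab
    exact Finset.sum_le_sum_of_subset (Finset.Icc_subset_Icc le_rfl hab)
  -- budget estimate : C * m ^ (d-1) ≤ A T
  have hbudget : C * m ^ (d - 1) ≤ A T := by
    have h1 : C * m ^ (d - 1) ≤ c * k ^ (d - 1) := by
      calc C * m ^ (d - 1) ≤ C * (4 * k) ^ (d - 1) :=
            Nat.mul_le_mul_left _ (Nat.pow_le_pow_left h4k _)
        _ = C * (4 ^ (d - 1) * k ^ (d - 1)) := by rw [mul_pow]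
        _ ≤ C * (4 ^ d * k ^ (d - 1)) := by
            refine Nat.mul_le_mul_left _ (Nat.mul_le_mul_right _ ?_)
            exact Nat.pow_le_pow_right (by norm_num) (by omega)
        _ = c * k ^ (d - 1) := by rw [hc]; ring
    refine h1.trans ?_
    have hkpow : k ^ (d - 1) = k * k ^ (d - 2) := by
      have : d - 1 = (d - 2) + 1 := by omega
      rw [this, pow_succ]
      ring
    have h2 : c * k ^ (d - 1) = ∑ _i ∈ Finset.Ico k (2 * k), c * k ^ (d - 2) := by
      rw [Finset.sum_const, Nat.card_Ico, smul_eq_mul, hkpow]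
      have h2k' : 2 * k - k = k := by omega
      rw [h2k']
      ring
    rw [h2, hA]
    calc ∑ _i ∈ Finset.Ico k (2 * k), c * k ^ (d - 2)
        ≤ ∑ i ∈ Finset.Ico k (2 * k), c * i ^ (d - 2) := by
          refine Finset.sum_le_sum fun i hi => ?_
          exact Nat.mul_le_mul_left _
            (Nat.pow_le_pow_left (Finset.mem_Ico.mp hi).1 _)
      _ ≤ ∑ i ∈ Finset.Icc 1 T, c * i ^ (d - 2) := by
          refine Finset.sum_le_sum_of_subset fun i hi => ?_
          have := Finset.mem_Ico.mp hi
          exact Finset.mem_Icc.mpr ⟨by omega, by omega⟩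
  -- finiteness of balls and the sphere of radius m
  have hBfin : ∀ n, (ball G g0 n).Finite := ball_finite G hlf g0
  have hSfin : (sphere G g0 m).Finite :=
    (hBfin m).subset (fun v hv => ⟨hv.1, hv.2.le⟩)
  set S : ℕ := (sphere G g0 m).ncard with hSdef
  have hScard : hSfin.toFinset.card = S := (Set.ncard_eq_toFinset_card _ hSfin).symm
  -- choose an enumeration of the sphere
  set e := hSfin.toFinset.equivFin with he
  set idx : V → ℕ := fun v => if h : v ∈ hSfin.toFinset then (e ⟨v, h⟩ : ℕ) else 0 with hidx
  have hidxlt : ∀ v ∈ sphere G g0 m, idx v < S := by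
    intro v hv
    have hv' : v ∈ hSfin.toFinset := hSfin.mem_toFinset.mpr hv
    rw [hidx]
    simp only [hv', dif_pos]
    rw [← hScard]
    exact (e ⟨v, hv'⟩).isLt
  have hidxinj : ∀ v ∈ sphere G g0 m, ∀ w ∈ sphere G g0 m, idx v = idx w → v = w := by
    intro v hv w hw hvw
    have hv' : v ∈ hSfin.toFinset := hSfin.mem_toFinset.mpr hv
    have hw' : w ∈ hSfin.toFinset := hSfin.mem_toFinset.mpr hw
    rw [hidx] at hvw
    simp only [hv', hw', dif_pos] at hvw
    have := e.injective (Fin.val_injective hvw)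
    exact congrArg Subtype.val this
  -- the strategy
  set W : ℕ → Set V := fun j =>
    if j = 0 then ∅ else {v | v ∈ sphere G g0 m ∧ A (j - 1) ≤ idx v ∧ idx v < A j} with hW
  have hWsub : ∀ j, W j ⊆ sphere G g0 m := by
    intro j v hv
    rw [hW] at hv
    by_cases hj : j = 0
    · simp [hj] at hv
    · simp only [hj, if_neg, if_false] at hv
      exact hv.1
  have hWfin : ∀ j, (W j).Finite := fun j => hSfin.subset (hWsub j)
  -- cardinality bound
  have hWcard : ∀ j, 1 ≤ j → (W j).ncard ≤ c * j ^ (d - 2) := by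
    intro j hj
    have hjne : j ≠ 0 := by omega
    have hsub : ∀ v ∈ W j, idx v ∈ (Finset.Ico (A (j - 1)) (A j) : Set ℕ) := by
      intro v hv
      rw [hW] at hv
      simp only [hjne, if_neg, if_false] at hv
      simp only [Finset.coe_Ico, Set.mem_Ico]
      exact hv.2
    have hinj : Set.InjOn idx (W j) := by
      intro v hv w hw hvw
      exact hidxinj v (hWsub j hv) w (hWsub j hw) hvw
    have := Set.ncard_le_ncard_of_injOn idx hsub hinj
      (Set.Finite.ofFinset (Finset.Ico (A (j - 1)) (A j)) (by simp))
    rw [Set.ncard_coe_finset, Nat.card_Ico] at this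
    refine this.trans ?_
    have hj' : j - 1 + 1 = j := by omega
    have := hAstep (j - 1)
    rw [hj'] at this
    omega
  -- the wall is complete at time T
  have hSA : S ≤ A T := le_trans hSm hbudget
  have hcover : ∀ v ∈ sphere G g0 m, ∃ i, 1 ≤ i ∧ i ≤ T ∧ v ∈ W i := by
    intro v hv
    have hex : ∃ j, idx v < A j := ⟨T, lt_of_lt_of_le (hidxlt v hv) hSA⟩
    set j := Nat.find hex with hj
    have hjspec : idx v < A j := Nat.find_spec hex
    have hj1 : 1 ≤ j := by
      rcases Nat.eq_zero_or_pos j with h0 | h1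
      · rw [h0, hA0] at hjspec; omega
      · exact h1
    have hjT : j ≤ T := Nat.find_min' hex (lt_of_lt_of_le (hidxlt v hv) hSA)
    have hjmin : ¬ (idx v < A (j - 1)) := Nat.find_min hex (by omega)
    refine ⟨j, hj1, hjT, ?_⟩
    rw [hW]
    have hjne : j ≠ 0 := by omega
    simp only [hjne, if_neg, if_false]
    exact ⟨hv, by omega, hjspec⟩
  -- main invariant
  have hfire : ∀ n, ∀ v ∈ fireSet G 1 X0 W n,
      G.Reachable g0 v ∧ G.dist g0 v ≤ R0 + n ∧ G.dist g0 v ≤ m - 1 := by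
    intro n
    induction n with
    | zero =>
      intro v hv
      obtain ⟨h1, h2⟩ := hX0ball hv
      exact ⟨h1, by omega, by omega⟩
    | succ n ih =>
      rintro v ⟨u, hu, p, hpl, hpw⟩
      obtain ⟨hur, huR, hum⟩ := ih u hu
      have hreach : G.Reachable g0 v := hur.trans ⟨p⟩
      have hduv : G.dist u v ≤ 1 := le_trans (SimpleGraph.dist_le p) hpl
      have htri : G.dist g0 v ≤ G.dist g0 u + G.dist u v := hconn.dist_triangle
      have hdv : G.dist g0 v ≤ m := by omega
      have hdvR : G.dist g0 v ≤ R0 + (n + 1) := by omega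
      refine ⟨hreach, hdvR, ?_⟩
      rcases Nat.lt_or_ge (n + 1) T with hlt | hge
      · omega
      · -- the wall is complete; v cannot be on the sphere of radius m
        by_cases hdm : G.dist g0 v = m
        · exfalso
          obtain ⟨i, hi1, hiT, hiW⟩ := hcover v ⟨hreach, hdm⟩
          exact hpw v (SimpleGraph.Walk.end_mem_support p) i hi1 (by omega) hiW
        · omega
  have hfireball : ∀ n, fireSet G 1 X0 W n ⊆ ball G g0 (m - 1) :=
    fun n v hv => ⟨(hfire n v hv).1, (hfire n v hv).2.2⟩
  have hfireW : ∀ n i, Disjoint (fireSet G 1 X0 W n) (W i) := by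
    intro n i
    rw [Set.disjoint_left]
    intro v hv hvW
    have h1 := (hfire n v hv).2.2
    have h2 := (hWsub i hvW).2
    omega
  -- monotonicity of the fire
  have hmono : ∀ n, fireSet G 1 X0 W n ⊆ fireSet G 1 X0 W (n + 1) := by
    intro n v hv
    refine ⟨v, hv, SimpleGraph.Walk.nil, by simp, ?_⟩
    intro w hw i _ _ hwW
    rw [SimpleGraph.Walk.support_nil, List.mem_singleton] at hw
    subst hw
    exact (Set.disjoint_left.mp (hfireW n i) hv) hwW
  have hchain : Monotone (fun n => fireSet G 1 X0 W n) := monotone_nat_of_le_succ hmono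
  -- stabilization
  have hffin : ∀ n, (fireSet G 1 X0 W n).Finite := fun n => (hBfin (m - 1)).subset (hfireball n)
  set a : ℕ → ℕ := fun n => (fireSet G 1 X0 W n).ncard with ha
  have habdd : ∀ n, a n ≤ (ball G g0 (m - 1)).ncard :=
    fun n => Set.ncard_le_ncard (hfireball n) (hBfin (m - 1))
  have hrange : Set.range a |>.Nonempty := ⟨a 0, ⟨0, rfl⟩⟩
  have hbdd : BddAbove (Set.range a) := by
    refine ⟨(ball G g0 (m - 1)).ncard, ?_⟩
    rintro x ⟨n, rfl⟩
    exact habdd n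
  obtain ⟨N', hN'⟩ := Nat.sSup_mem hrange hbdd
  have hstab : ∀ n, N' ≤ n → fireSet G 1 X0 W n = fireSet G 1 X0 W N' := by
    intro n hn
    have hsub : fireSet G 1 X0 W N' ⊆ fireSet G 1 X0 W n := hchain hn
    have hle : a n ≤ a N' := by
      rw [hN']
      exact le_csSup hbdd ⟨n, rfl⟩
    exact (Set.eq_of_subset_of_ncard_le hsub hle (hffin n)).symm
  refine ⟨W, ⟨fun n hn => ⟨hWfin n, hWcard n hn⟩, fun n => hfireW n (n + 1),
    ⟨N' + 1, Nat.succ_pos _, fun n hn => ?_⟩⟩⟩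
  rw [hstab n (by omega), hstab (N' + 1) (by omega)]

end Firefighter
end

section
/- Let G be a locally finite graph, let {f_n} be a non-decreasing sequence of non-negative integers, let r be a positive integer, and define g_{n+1} = Σ_{i=1}^{r} f_{rn+i} for n ≥ 0. Then G has the ({f_n}, 1)-containment property if and only if G has the ({g_n}, r)-containment property. -/
open SimpleGraph

namespace Firefighter

variable {V : Type*}

/-
One round of the `r`-fire corresponds to `r` rounds of the `1`-fire, the `g (n+1)` vertices
protected in round `n+1` being spread over the rounds `r n + 1, …, r n + r`. Given a
`1`-strategy `W`, the blocks `W' (n+1) = ⋃_{i<r} W (r n + i + 1)` form an `r`-strategy whose fire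
at time `n` lies inside the `1`-fire at time `r n`. Conversely, split each `W' (n+1)` into pieces
of sizes at most `f (r n + i + 1)`; if `W'` is an `r`-strategy for the `r`-ball around `X₀`, the
`1`-fire from `X₀` at time `t` stays inside the `r`-fire at time `⌊t / r⌋` (starting from the ball
absorbs the first `r - 1` rounds). In both directions the dominating fire is eventually constant,
hence finite on a locally finite graph, and a monotone sequence of sets inside a finite set
stabilises.
-/

section FireSet

variable {G : SimpleGraph V} {r : ℕ} {X0 : Set V} {W : ℕ → Set V}

lemma mem_fireSet_succ {v : V} {n : ℕ} :
    v ∈ fireSet G r X0 W (n + 1) ↔ ∃ u ∈ fireSet G r X0 W n, ∃ p : G.Walk u v,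
      p.length ≤ r ∧ ∀ w ∈ p.support, ∀ i, 1 ≤ i → i ≤ n + 1 → w ∉ W i :=
  Iff.rfl

lemma notMem_of_mem_fireSet {v : V} {n j : ℕ} (hv : v ∈ fireSet G r X0 W n) (hj : 1 ≤ j)
    (hjn : j ≤ n) : v ∉ W j := by
  cases n with
  | zero => omega
  | succ n =>
    obtain ⟨u, -, p, -, hp⟩ := mem_fireSet_succ.mp hv
    exact hp v p.end_mem_support j hj hjn

lemma fireSet_subset_succ {n : ℕ} (hd : Disjoint (fireSet G r X0 W n) (W (n + 1))) :
    fireSet G r X0 W n ⊆ fireSet G r X0 W (n + 1) := by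
  intro v hv
  refine ⟨v, hv, .nil, by simp, fun w hw j hj hjn => ?_⟩
  rw [Walk.support_nil, List.mem_singleton] at hw
  subst hw
  rcases hjn.lt_or_eq with hjn | rfl
  · exact notMem_of_mem_fireSet hv hj (by omega)
  · exact Set.disjoint_left.mp hd hv

lemma fireSet_monotone (hd : ∀ n, Disjoint (fireSet G r X0 W n) (W (n + 1))) :
    Monotone (fireSet G r X0 W) :=
  monotone_nat_of_le_succ fun n => fireSet_subset_succ (hd n)

lemma notMem_of_mem_fireSet_of_disjoint (hd : ∀ n, Disjoint (fireSet G r X0 W n) (W (n + 1)))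
    {v : V} {n j : ℕ} (hv : v ∈ fireSet G r X0 W n) (hj : 1 ≤ j) : v ∉ W j :=
  notMem_of_mem_fireSet (fireSet_monotone hd le_sup_left hv) hj le_sup_right

lemma ballSet_finite (hlf : LocallyFiniteGraph G) {X : Set V} (hX : X.Finite) (n : ℕ) :
    (ballSet G X n).Finite := by
  induction n generalizing X with
  | zero =>
    refine hX.subset ?_
    rintro v ⟨u, hu, p, hp⟩
    rwa [← Walk.eq_of_length_eq_zero (Nat.le_zero.mp hp)]
  | succ n ih =>
    refine (ih (hX.union (hX.biUnion fun u _ => hlf u))).subset ?_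
    rintro v ⟨u, hu, p, hp⟩
    cases p with
    | nil => exact ⟨v, Or.inl hu, .nil, by simp⟩
    | cons hadj q =>
      exact ⟨_, Or.inr (Set.mem_biUnion hu hadj), q, by rw [Walk.length_cons] at hp; omega⟩

lemma fireSet_finite (hlf : LocallyFiniteGraph G) (hX0 : X0.Finite) (n : ℕ) :
    (fireSet G r X0 W n).Finite := by
  induction n with
  | zero => exact hX0
  | succ n ih =>
    refine (ballSet_finite hlf ih r).subset ?_
    rintro v ⟨u, hu, p, hp, -⟩
    exact ⟨u, hu, p, hp⟩

end FireSet

lemma exists_forall_ge_eq_of_monotone {α : Type*} {A : ℕ → Set α} (hA : Monotone A)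
    {S : Set α} (hS : S.Finite) (hAS : ∀ n, A n ⊆ S) : ∃ N, ∀ n, N ≤ n → A n = A N := by
  obtain ⟨N, -, hN⟩ := Set.Finite.exists_maximalFor' A Set.univ
    (hS.finite_subsets.subset (by rintro _ ⟨n, -, rfl⟩; exact hAS n)) Set.univ_nonempty
  exact ⟨N, fun n hn => (hN trivial (hA hn)).antisymm (hA hn)⟩

lemma exists_iUnion_eq_of_ncard_le_sum {α : Type*} (a : ℕ → ℕ) (k : ℕ) {S : Set α}
    (hS : S.Finite) (hcard : S.ncard ≤ ∑ i ∈ Finset.range k, a i) :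
    ∃ P : ℕ → Set α, (∀ i, (P i).Finite ∧ (P i).ncard ≤ a i) ∧
      S = ⋃ i ∈ Finset.range k, P i := by
  induction k generalizing S with
  | zero =>
    refine ⟨fun _ => ∅, fun _ => ⟨Set.finite_empty, by simp⟩, ?_⟩
    simpa [Set.ncard_eq_zero hS] using hcard
  | succ k ih =>
    obtain ⟨A, hAS, hA⟩ := Set.exists_subset_card_eq (min_le_left S.ncard (a k))
    have hdiff := Set.ncard_sdiff hAS (hS.subset hAS)
    rw [Finset.sum_range_succ] at hcard
    obtain ⟨P, hP, hSP⟩ := ih (S := S \ A) hS.sdiff (by omega)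
    refine ⟨Function.update P k A, fun i => ?_, ?_⟩
    · rcases eq_or_ne i k with rfl | hik
      · simpa [hA] using hS.subset hAS
      · simpa [hik] using hP i
    · have hPk : ⋃ i ∈ Finset.range k, Function.update P k A i = ⋃ i ∈ Finset.range k, P i :=
        Set.iUnion₂_congr fun i hi => Function.update_of_ne (Finset.mem_range.mp hi).ne _ _
      rw [Finset.range_add_one, Finset.set_biUnion_insert, Function.update_self, hPk, ← hSP,
        Set.union_sdiff_cancel hAS]

section Strategy

variable {G : SimpleGraph V} {r : ℕ} {f : ℕ → ℕ} {X0 : Set V} {W : ℕ → Set V}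

lemma IsContainmentStrategy.exists_finite_superset (hlf : LocallyFiniteGraph G)
    (hX0 : X0.Finite) (hW : IsContainmentStrategy G r f X0 W) :
    ∃ S : Set V, S.Finite ∧ ∀ n, fireSet G r X0 W n ⊆ S := by
  obtain ⟨-, hd, N, -, hN⟩ := hW
  refine ⟨fireSet G r X0 W N, fireSet_finite hlf hX0 N, fun n => ?_⟩
  rcases le_total n N with h | h
  · exact fireSet_monotone hd h
  · exact (hN n h).le

lemma isContainmentStrategy_of_subset_finite
    (hsize : ∀ n, 1 ≤ n → (W n).Finite ∧ (W n).ncard ≤ f n)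
    (hd : ∀ n, Disjoint (fireSet G r X0 W n) (W (n + 1))) {S : Set V} (hS : S.Finite)
    (hsub : ∀ n, fireSet G r X0 W n ⊆ S) : IsContainmentStrategy G r f X0 W := by
  obtain ⟨N, hN⟩ := exists_forall_ge_eq_of_monotone (fireSet_monotone hd) hS hsub
  exact ⟨hsize, hd, N + 1, N.succ_pos, fun n hn => (hN n (by omega)).trans (hN _ (by omega)).symm⟩

end Strategy

section SpreadOne

variable {G : SimpleGraph V} {X0 : Set V} {W : ℕ → Set V}

lemma mem_fireSet_one_succ_of_adj {u v : V} {m : ℕ} (hu : u ∈ fireSet G 1 X0 W m)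
    (huv : G.Adj u v) (hW : ∀ j, 1 ≤ j → j ≤ m + 1 → u ∉ W j ∧ v ∉ W j) :
    v ∈ fireSet G 1 X0 W (m + 1) := by
  refine ⟨u, hu, .cons huv .nil, by simp, fun w hw j hj hjm => ?_⟩
  rw [Walk.support_cons, Walk.support_nil, List.mem_pair] at hw
  rcases hw with rfl | rfl
  exacts [(hW j hj hjm).1, (hW j hj hjm).2]

lemma mem_fireSet_one_of_walk {u v : V} (p : G.Walk u v) {m : ℕ}
    (hu : u ∈ fireSet G 1 X0 W m)
    (hp : ∀ w ∈ p.support, ∀ j, 1 ≤ j → j ≤ m + p.length → w ∉ W j) :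
    v ∈ fireSet G 1 X0 W (m + p.length) := by
  induction p generalizing m with
  | nil => exact hu
  | cons hab q ih =>
    simp only [Walk.support_cons, List.mem_cons, forall_eq_or_imp, Walk.length_cons] at hp
    have hb := mem_fireSet_one_succ_of_adj hu hab fun j hj hjm =>
      ⟨hp.1 j hj (by omega), hp.2 _ q.start_mem_support j hj (by omega)⟩
    have hv := ih hb fun w hw j hj hjm => hp.2 w hw j hj (by omega)
    rwa [Walk.length_cons, ← add_assoc, add_right_comm]

lemma exists_walk_of_mem_fireSet_one {m s : ℕ}
    (hd : ∀ t < m + s, Disjoint (fireSet G 1 X0 W t) (W (t + 1))) {v : V}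
    (hv : v ∈ fireSet G 1 X0 W (m + s)) :
    ∃ u ∈ fireSet G 1 X0 W m, ∃ p : G.Walk u v, p.length ≤ s ∧
      ∀ w ∈ p.support, w ∈ fireSet G 1 X0 W (m + s) := by
  induction s generalizing v with
  | zero => exact ⟨v, hv, .nil, le_rfl, fun w hw => by simp_all⟩
  | succ s ih =>
    obtain ⟨v', hv', q, hq, -⟩ := mem_fireSet_succ.mp hv
    have hgrow := fireSet_subset_succ (hd (m + s) (by omega))
    obtain ⟨u, hu, p, hp, hpv⟩ := ih (fun t ht => hd t (by omega)) hv'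
    rcases Nat.le_one_iff_eq_zero_or_eq_one.mp hq with hq | hq
    · obtain rfl := Walk.eq_of_length_eq_zero hq
      exact ⟨u, hu, p, by omega, fun w hw => hgrow (hpv w hw)⟩
    · refine ⟨u, hu, p.concat (Walk.adj_of_length_eq_one hq), by rw [Walk.length_concat]; omega,
        fun w hw => ?_⟩
      rw [Walk.support_concat, List.mem_append, List.mem_singleton] at hw
      rcases hw with hw | rfl
      · exact hgrow (hpv w hw)
      · exact hv

end SpreadOne

section Blocks

variable {G : SimpleGraph V} {r : ℕ} {X0 : Set V} {W W' : ℕ → Set V}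
  (hW' : ∀ n, W' (n + 1) = ⋃ i ∈ Finset.range r, W (r * n + i + 1))
include hW'

lemma subset_block (hr : 0 < r) (t : ℕ) : W (t + 1) ⊆ W' (t / r + 1) := by
  rw [hW']
  intro w hw
  refine Set.mem_biUnion (Finset.mem_range.mpr (Nat.mod_lt t hr)) ?_
  rwa [Nat.div_add_mod]

lemma forall_notMem_block_iff {w : V} {n : ℕ} :
    (∀ i, 1 ≤ i → i ≤ n → w ∉ W' i) ↔ ∀ j, 1 ≤ j → j ≤ r * n → w ∉ W j := by
  constructor
  · intro h j hj hjn hw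
    have hr : 0 < r := Nat.pos_of_ne_zero (by rintro rfl; omega)
    obtain ⟨t, rfl⟩ := Nat.exists_eq_add_of_le' hj
    have ht : t / r < n := (Nat.div_lt_iff_lt_mul hr).mpr (by rw [mul_comm]; omega)
    exact h (t / r + 1) le_add_self ht (subset_block hW' hr t hw)
  · intro h i hi hin hw
    obtain ⟨k, rfl⟩ := Nat.exists_eq_add_of_le' hi
    rw [hW', Set.mem_iUnion₂] at hw
    obtain ⟨q, hq, hw⟩ := hw
    have hkn : r * (k + 1) ≤ r * n := Nat.mul_le_mul_left r hin
    rw [Finset.mem_range] at hq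
    exact h _ le_add_self (by rw [mul_add_one] at hkn; omega) hw

lemma fireSet_block_subset (hd : ∀ t, Disjoint (fireSet G 1 X0 W t) (W (t + 1))) (n : ℕ) :
    fireSet G r X0 W' n ⊆ fireSet G 1 X0 W (r * n) := by
  induction n with
  | zero => exact subset_rfl
  | succ n ih =>
    rintro v ⟨u, hu, p, hp, hpW⟩
    have hv := mem_fireSet_one_of_walk p (ih hu) fun w hw j hj hjn =>
      (forall_notMem_block_iff hW').mp (hpW w hw) j hj (by rw [mul_add_one]; omega)
    exact fireSet_monotone hd (by rw [mul_add_one]; omega) hv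

lemma disjoint_fireSet_block (hd : ∀ t, Disjoint (fireSet G 1 X0 W t) (W (t + 1))) (n : ℕ) :
    Disjoint (fireSet G r X0 W' n) (W' (n + 1)) := by
  rw [hW', Set.disjoint_iUnion₂_right]
  exact fun i _ => Set.disjoint_left.mpr fun v hv =>
    notMem_of_mem_fireSet_of_disjoint hd (fireSet_block_subset hW' hd n hv) le_add_self

lemma disjoint_fireSet_one_of_subset (hr : 0 < r) {X1 : Set V}
    (hd' : ∀ n, Disjoint (fireSet G r X1 W' n) (W' (n + 1))) {t : ℕ}
    (ht : fireSet G 1 X0 W t ⊆ fireSet G r X1 W' (t / r)) :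
    Disjoint (fireSet G 1 X0 W t) (W (t + 1)) :=
  (hd' (t / r)).mono ht (subset_block hW' hr t)

lemma fireSet_one_subset_fireSet_block (hr : 0 < r)
    (hd' : ∀ n, Disjoint (fireSet G r (ballSet G X0 r) W' n) (W' (n + 1))) (t : ℕ) :
    fireSet G 1 X0 W t ⊆ fireSet G r (ballSet G X0 r) W' (t / r) := by
  induction t using Nat.strong_induction_on with
  | _ t ih =>
  -- `W (s + 1)` lies in a block of `W'`, which the `r`-fire containing the `1`-fire avoids
  have hd : ∀ s < t, Disjoint (fireSet G 1 X0 W s) (W (s + 1)) := fun s hs =>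
    disjoint_fireSet_one_of_subset hW' hr hd' (ih s hs)
  intro v hv
  rcases lt_or_ge t r with htr | htr
  · obtain ⟨u, hu, p, hp, -⟩ :=
      exists_walk_of_mem_fireSet_one (m := 0) (by simpa using hd) (by simpa using hv)
    rw [Nat.div_eq_of_lt htr]
    exact ⟨u, hu, p, by omega⟩
  · obtain ⟨s, rfl⟩ := Nat.exists_eq_add_of_le' htr
    obtain ⟨u, hu, p, hp, hpv⟩ := exists_walk_of_mem_fireSet_one hd hv
    have hsr : r * (s / r + 1) ≤ s + r := by rw [mul_add_one]; have := Nat.mul_div_le s r; omega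
    rw [Nat.add_div_right s hr]
    exact ⟨u, ih s (by omega) hu, p, hp, fun w hw => (forall_notMem_block_iff hW').mpr
      fun j hj hjn => notMem_of_mem_fireSet (hpv w hw) hj (hjn.trans hsr)⟩

end Blocks

section Equivalence

variable {G : SimpleGraph V} {r : ℕ} {f g : ℕ → ℕ}

theorem HasContainmentProperty.blocks_of_one (hlf : LocallyFiniteGraph G)
    (hg : ∀ n : ℕ, g (n + 1) = ∑ i ∈ Finset.range r, f (r * n + i + 1))
    (h : HasContainmentProperty G 1 f) : HasContainmentProperty G r g := by
  intro X0 hX0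
  obtain ⟨W, hW⟩ := h X0 hX0
  obtain ⟨S, hS, hWS⟩ := hW.exists_finite_superset hlf hX0
  obtain ⟨hsize, hd, -⟩ := hW
  -- the value at `0` (truncated subtraction) plays no role in the game
  let W' : ℕ → Set V := fun n => ⋃ i ∈ Finset.range r, W (r * (n - 1) + i + 1)
  have hW' : ∀ n, W' (n + 1) = ⋃ i ∈ Finset.range r, W (r * n + i + 1) := fun n => rfl
  refine ⟨W', isContainmentStrategy_of_subset_finite (fun n hn => ?_)
    (disjoint_fireSet_block hW' hd) hS fun n => (fireSet_block_subset hW' hd n).trans (hWS _)⟩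
  obtain ⟨n, rfl⟩ := Nat.exists_eq_add_of_le' hn
  rw [hW', hg]
  exact ⟨(Finset.range r).finite_toSet.biUnion fun i _ => (hsize _ le_add_self).1,
    ((Finset.range r).set_ncard_biUnion_le _).trans
      (Finset.sum_le_sum fun i _ => (hsize _ le_add_self).2)⟩

theorem HasContainmentProperty.one_of_blocks (hlf : LocallyFiniteGraph G) (hr : 0 < r)
    (hg : ∀ n : ℕ, g (n + 1) = ∑ i ∈ Finset.range r, f (r * n + i + 1))
    (h : HasContainmentProperty G r g) : HasContainmentProperty G 1 f := by
  intro X0 hX0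
  obtain ⟨W', hW'⟩ := h (ballSet G X0 r) (ballSet_finite hlf hX0 r)
  obtain ⟨S, hS, hW'S⟩ := hW'.exists_finite_superset hlf (ballSet_finite hlf hX0 r)
  obtain ⟨hsize', hd', -⟩ := hW'
  choose P hP hW'P using fun n => exists_iUnion_eq_of_ncard_le_sum (fun i => f (r * n + i + 1)) r
    (hsize' (n + 1) le_add_self).1 ((hsize' (n + 1) le_add_self).2.trans (hg n).le)
  -- the value at `0` (truncated subtraction) plays no role in the game
  let W : ℕ → Set V := fun t => P ((t - 1) / r) ((t - 1) % r)
  have hWP : ∀ n i, i < r → W (r * n + i + 1) = P n i := fun n i hi => by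
    simp only [W, Nat.add_sub_cancel, Nat.mul_add_div hr, Nat.div_eq_of_lt hi, Nat.mul_add_mod,
      Nat.mod_eq_of_lt hi, add_zero]
  have hW' : ∀ n, W' (n + 1) = ⋃ i ∈ Finset.range r, W (r * n + i + 1) := fun n => by
    rw [hW'P n]
    exact Set.iUnion₂_congr fun i hi => (hWP n i (Finset.mem_range.mp hi)).symm
  have hsub := fireSet_one_subset_fireSet_block hW' hr hd'
  refine ⟨W, isContainmentStrategy_of_subset_finite (fun n hn => ?_)
    (fun t => disjoint_fireSet_one_of_subset hW' hr hd' (hsub t)) hS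
    fun t => (hsub t).trans (hW'S _)⟩
  obtain ⟨t, rfl⟩ := Nat.exists_eq_add_of_le' hn
  have := hP (t / r) (t % r)
  rwa [Nat.div_add_mod] at this

end Equivalence

theorem stmt7_general {V : Type*} (G : SimpleGraph V) (hlf : LocallyFiniteGraph G)
    (f : ℕ → ℕ) (r : ℕ) (hr : 1 ≤ r) (g : ℕ → ℕ)
    (hg : ∀ n : ℕ, g (n + 1) = ∑ i ∈ Finset.range r, f (r * n + i + 1)) :
    HasContainmentProperty G 1 f ↔ HasContainmentProperty G r g :=
  ⟨HasContainmentProperty.blocks_of_one hlf hg, HasContainmentProperty.one_of_blocks hlf hr hg⟩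

/-- for a non-decreasing sequence `f` and `g (n+1) = Σ_{i=1}^{r} f (r*n + i)`, the
graph `G` has the `({f_n}, 1)`-containment property iff it has the `({g_n}, r)`-containment
property. -/
theorem stmt7 {V : Type*} (G : SimpleGraph V) (hlf : LocallyFiniteGraph G)
    (f : ℕ → ℕ) (hf : Monotone f) (r : ℕ) (hr : 1 ≤ r) (g : ℕ → ℕ)
    (hg : ∀ n : ℕ, g (n + 1) = ∑ i ∈ Finset.range r, f (r * n + i + 1)) :
    HasContainmentProperty G 1 f ↔ HasContainmentProperty G r g :=
  stmt7_general G hlf f r hr g hg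

end Firefighter
end
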